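/- Let A be a reduced commutative ring with finitely many minimal prime ideals, all of them real (condition (mp)), and let A ⊆ B be an integral extension which is biregular, i.e. for every real prime ideal p of A there is exactly one prime ideal q of B lying over p and the induced map of localizations A_p → B_q is an isomorphism. Then the extension A ⊆ B is R-subintegral. -/

import Mathlib

/-- An ideal `I` of a commutative ring is *real* if whenever a finite sum of squares
of elements lies in `I`, then each of these elements lies in `I`. -/
def Ideal.IsRealIdeal {A : Type*} [CommRing A] (I : Ideal A) : Prop :=
  ∀ (n : ℕ) (a : Fin n → A), (∑ i, a i ^ 2) ∈ I → ∀ i, a i ∈ I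

/-- An integral extension `φ : A → B` is *R-subintegral* if for every real prime ideal `p`
of `A` there is exactly one prime ideal `q` of `B` lying over `p`, this `q` is a real ideal,
and the induced map of residue fields `κ(p) → κ(q)` is an isomorphism.  (The residue-field
isomorphism is expressed by its surjectivity: every `b : B` is congruent mod `q` to a
fraction `a/s` with `a s : A`, `s ∉ p`; injectivity is automatic for fields.) -/
def RSubintegral {A B : Type*} [CommRing A] [CommRing B] (φ : A →+* B) : Prop :=
  ∀ p : Ideal A, p.IsPrime → p.IsRealIdeal →
    (∃! q : Ideal B, q.IsPrime ∧ q.comap φ = p) ∧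
    ∀ q : Ideal B, q.IsPrime → q.comap φ = p →
      q.IsRealIdeal ∧ ∀ b : B, ∃ a s : A, s ∉ p ∧ φ s * b - φ a ∈ q

/-!
The localization isomorphism `A_p ≅ B_q` induces an isomorphism of residue fields, i.e. every
`b : B` is congruent modulo `q` to a fraction `a / s` with `s ∉ p`. Realness of `q` follows by
clearing denominators: if `∑ bᵢ²` lies in `q` and `S ∉ p` is a common denominator with
`S bᵢ ≡ cᵢ (mod q)`, then `∑ cᵢ²` lies in `q ∩ A = p`, so every `cᵢ` lies in `p`, and hence every
`bᵢ` lies in `q`.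
-/

section

variable {A B : Type*} [CommRing A] [CommRing B] (φ : A →+* B) {p : Ideal A} {q : Ideal B}

theorem exists_mul_sub_mem_of_localRingHom_surjective [p.IsPrime] [q.IsPrime]
    (hpq : p = q.comap φ) (hsurj : Function.Surjective (Localization.localRingHom p q φ hpq))
    (b : B) : ∃ a s : A, s ∉ p ∧ φ s * b - φ a ∈ q := by
  obtain ⟨x, hx⟩ := hsurj (algebraMap B (Localization.AtPrime q) b)
  obtain ⟨⟨a, s⟩, rfl⟩ := IsLocalization.mk'_surjective p.primeCompl x
  rw [Localization.localRingHom_mk', IsLocalization.mk'_eq_iff_eq_mul] at hx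
  refine ⟨a, s, s.2, ?_⟩
  rw [← IsLocalization.AtPrime.to_map_mem_maximal_iff (Localization.AtPrime q) q, map_sub,
    map_mul, mul_comm, ← hx, sub_self]
  exact Ideal.zero_mem _

theorem exists_common_denominator [p.IsPrime]
    (hres : ∀ b : B, ∃ a s : A, s ∉ p ∧ φ s * b - φ a ∈ q) {ι : Type*} [Fintype ι]
    (b : ι → B) : ∃ S : A, S ∉ p ∧ ∃ c : ι → A, ∀ i, φ S * b i - φ (c i) ∈ q := by
  classical
  choose a s hs hmem using fun i => hres (b i)
  refine ⟨∏ j, s j, fun h => ?_, fun i => (∏ j ∈ Finset.univ.erase i, s j) * a i, fun i => ?_⟩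
  · obtain ⟨j, -, hj⟩ := Ideal.IsPrime.prod_mem_iff.1 h
    exact hs j hj
  · have hfactor : φ (∏ j, s j) * b i - φ ((∏ j ∈ Finset.univ.erase i, s j) * a i)
        = φ (∏ j ∈ Finset.univ.erase i, s j) * (φ (s i) * b i - φ (a i)) := by
      rw [← Finset.mul_prod_erase Finset.univ s (Finset.mem_univ i)]
      simp only [map_mul]
      ring
    rw [hfactor]
    exact Ideal.mul_mem_left _ _ (hmem i)

theorem isRealIdeal_of_forall_exists_mul_sub_mem [q.IsPrime] (hpq : q.comap φ = p)
    (hp : p.IsRealIdeal) (hres : ∀ b : B, ∃ a s : A, s ∉ p ∧ φ s * b - φ a ∈ q) :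
    q.IsRealIdeal := by
  subst hpq
  intro n b hb i
  obtain ⟨S, hS, c, hc⟩ := exists_common_denominator φ hres b
  have hmk : ∀ j, Ideal.Quotient.mk q (φ (c j))
      = Ideal.Quotient.mk q (φ S) * Ideal.Quotient.mk q (b j) := fun j => by
    rw [← map_mul, Ideal.Quotient.eq]
    exact sub_mem_comm_iff.mp (hc j)
  have hsum : ∑ j, c j ^ 2 ∈ q.comap φ := by
    have hb0 := Ideal.Quotient.eq_zero_iff_mem.2 hb
    rw [Ideal.mem_comap, ← Ideal.Quotient.eq_zero_iff_mem]
    simp only [map_sum, map_pow] at hb0 ⊢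
    simp only [hmk, mul_pow, ← Finset.mul_sum, hb0, mul_zero]
  have hci : Ideal.Quotient.mk q (φ (c i)) = 0 := Ideal.Quotient.eq_zero_iff_mem.2 (hp n c hsum i)
  have hS' : Ideal.Quotient.mk q (φ S) ≠ 0 := by rwa [Ne, Ideal.Quotient.eq_zero_iff_mem]
  rw [hmk i] at hci
  exact Ideal.Quotient.eq_zero_iff_mem.1 ((mul_eq_zero.1 hci).resolve_left hS')

end

theorem biregular_rSubintegral_general {A B : Type*} [CommRing A] [CommRing B]
    (φ : A →+* B)
    (hbireg : ∀ (p : Ideal A) (hp : p.IsPrime), p.IsRealIdeal →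
      (∃! q : Ideal B, q.IsPrime ∧ q.comap φ = p) ∧
      ∀ (q : Ideal B) (hq : q.IsPrime) (hover : q.comap φ = p),
        Function.Bijective (@Localization.localRingHom A _ B _ p hp q hq φ hover.symm)) :
    RSubintegral φ := by
  intro p hp hpreal
  obtain ⟨huniq, hbij⟩ := hbireg p hp hpreal
  refine ⟨huniq, fun q hq hover => ?_⟩
  have hres := exists_mul_sub_mem_of_localRingHom_surjective φ hover.symm (hbij q hq hover).2
  exact ⟨isRealIdeal_of_forall_exists_mul_sub_mem φ hover hpreal hres, hres⟩

/-- If `A` satisfies condition (mp) (reduced with finitely many minimal primes, all real)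
and `A ⊆ B` is an integral biregular extension (over each real prime `p` of `A` there is
exactly one prime `q` of `B`, and `A_p → B_q` is an isomorphism), then `A ⊆ B` is
R-subintegral. -/
theorem biregular_rSubintegral {A B : Type*} [CommRing A] [CommRing B]
    (φ : A →+* B) (hinj : Function.Injective φ) (hint : φ.IsIntegral)
    [IsReduced A] (hfin : (minimalPrimes A).Finite)
    (hmin : ∀ p ∈ minimalPrimes A, p.IsRealIdeal)
    (hbireg : ∀ (p : Ideal A) (hp : p.IsPrime), p.IsRealIdeal →
      (∃! q : Ideal B, q.IsPrime ∧ q.comap φ = p) ∧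
      ∀ (q : Ideal B) (hq : q.IsPrime) (hover : q.comap φ = p),
        Function.Bijective (@Localization.localRingHom A _ B _ p hp q hq φ hover.symm)) :
    RSubintegral φ :=
  biregular_rSubintegral_general φ hbireg
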